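/- arXiv:1501.00040 — 9 statements merged into one kernel-verified Lean document; each statement's English description precedes it below -/
import Mathlib

section
/- For a multilayer modularity maximization problem with ordinal diagonal uniform inter-layer coupling ω, any globally optimal multilayer partition (whose communities contain no components disconnected in the weighted graph with adjacency matrix given by the multilayer modularity matrix) has strictly positive persistence if and only if ω > 0. -/
open Finset

/-- Kronecker delta on community labels, as a real number. -/
noncomputable def kdelta (a b : ℕ) : ℝ := if a = b then 1 else 0

/-- Persistence between layers `s` and `s+1`: the number of nodes whose community
assignment is unchanged from layer `s` to layer `s+1`. -/
def persAt (N : ℕ) (c : ℕ → Fin N → ℕ) (s : ℕ) : ℕ :=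
  (Finset.univ.filter fun i : Fin N => c s i = c (s + 1) i).card

/-- Total persistence of a multilayer partition: `Pers(C) = Σ_{s=1}^{|T|-1} Σ_i δ(c_{i_s}, c_{i_{s+1}})`. -/
def pers (N T : ℕ) (c : ℕ → Fin N → ℕ) : ℕ :=
  ∑ s ∈ Finset.range (T - 1), persAt N c s

/-- Multilayer modularity quality function
`Q(C) = Σ_s Σ_{i,j} B_{ijs} δ(c_{i_s}, c_{j_s}) + 2 ω Pers(C)`. -/
noncomputable def Q (N T : ℕ) (B : ℕ → Fin N → Fin N → ℝ) (ω : ℝ) (c : ℕ → Fin N → ℕ) : ℝ :=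
  (∑ s ∈ Finset.range T, ∑ i : Fin N, ∑ j : Fin N, B s i j * kdelta (c s i) (c s j))
    + 2 * ω * (pers N T c : ℝ)

/-- A multilayer partition (given by its community-assignment function) is globally
optimal for inter-layer coupling `ω` if it maximizes the multilayer quality function. -/
def IsOptimal (N T : ℕ) (B : ℕ → Fin N → Fin N → ℝ) (ω : ℝ) (c : ℕ → Fin N → ℕ) : Prop :=
  ∀ c' : ℕ → Fin N → ℕ, Q N T B ω c' ≤ Q N T B ω c

/-- Adjacency (nonzero weight) in the multilayer modularity matrix: intra-layer entries
`B_{ijs}` and ordinal diagonal uniform inter-layer coupling `ω` between consecutive layers. -/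
def Adj (N T : ℕ) (B : ℕ → Fin N → Fin N → ℝ) (ω : ℝ) (p q : ℕ × Fin N) : Prop :=
  (p.1 = q.1 ∧ p.1 < T ∧ B p.1 p.2 q.2 ≠ 0) ∨
  (p.2 = q.2 ∧ ω ≠ 0 ∧ ((p.1 + 1 = q.1 ∧ q.1 < T) ∨ (q.1 + 1 = p.1 ∧ p.1 < T)))

/-- No community of the multilayer partition contains a component that is disconnected in
the weighted graph whose adjacency matrix is the multilayer modularity matrix: any two
node-layer pairs in the same community are joined by a path staying inside that community. -/
def NoDisconnectedCommunities (N T : ℕ) (B : ℕ → Fin N → Fin N → ℝ) (ω : ℝ)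
    (c : ℕ → Fin N → ℕ) : Prop :=
  ∀ p q : ℕ × Fin N, p.1 < T → q.1 < T → c p.1 p.2 = c q.1 q.2 →
    Relation.ReflTransGen
      (fun a b => Adj N T B ω a b ∧ c a.1 a.2 = c p.1 p.2 ∧ c b.1 b.2 = c p.1 p.2) p q

lemma kdelta_relabel (x y z : ℕ) :
    kdelta (if x = z then 0 else x + 1) (if y = z then 0 else y + 1) = kdelta x y := by
  unfold kdelta
  split_ifs <;> simp_all

lemma layer_eq_of_rtg' {α : Type*} {r : ℕ × α → ℕ × α → Prop} (h : ∀ a b, r a b → a.1 = b.1)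
    {p q} (hpq : Relation.ReflTransGen r p q) : p.1 = q.1 := by
  induction hpq with
  | refl => rfl
  | tail h1 h2 ih => exact ih.trans (h _ _ h2)

/-- **Proposition 1.** For a multilayer modularity-maximization problem with ordinal
diagonal uniform inter-layer coupling `ω ≥ 0`, any globally optimal multilayer partition
(whose communities contain no disconnected components) has strictly positive persistence
if and only if `ω > 0`. -/
theorem persistence_pos_iff_coupling_pos
    (N T : ℕ) (hN : 0 < N) (hT : 2 ≤ T)
    (B : ℕ → Fin N → Fin N → ℝ) (ω : ℝ) (hω : 0 ≤ ω)
    (c : ℕ → Fin N → ℕ)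
    (hopt : IsOptimal N T B ω c)
    (hconn : NoDisconnectedCommunities N T B ω c) :
    0 < pers N T c ↔ 0 < ω := by
  constructor
  · -- pers > 0 → ω > 0
    intro hp
    rcases hω.lt_or_eq with h | h
    · exact h
    · exfalso
      -- ω = 0 : no inter-layer adjacency, so communities are within single layers
      have hω0 : ω = 0 := h.symm
      -- find a persisting node
      have hne : pers N T c ≠ 0 := hp.ne'
      rw [pers] at hne
      have : ∃ s ∈ Finset.range (T - 1), persAt N c s ≠ 0 := by
        by_contra hall
        push_neg at hall
        exact hne (Finset.sum_eq_zero hall)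
      obtain ⟨s, hs, hsa⟩ := this
      rw [persAt] at hsa
      have : ∃ i : Fin N, c s i = c (s + 1) i := by
        obtain ⟨i, hi⟩ := Finset.card_ne_zero.mp hsa
        exact ⟨i, (Finset.mem_filter.mp hi).2⟩
      obtain ⟨i, hi⟩ := this
      have hs' : s < T - 1 := Finset.mem_range.mp hs
      have h1 : s < T := by omega
      have h2 : s + 1 < T := by omega
      have hpath := hconn (s, i) (s + 1, i) h1 h2 hi
      have hlayer : ((s, i) : ℕ × Fin N).1 = ((s + 1, i) : ℕ × Fin N).1 := by
        refine layer_eq_of_rtg' (fun a b hab => ?_) hpath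
        rcases hab.1 with ⟨h', _⟩ | ⟨_, hω', _⟩
        · exact h'
        · exact absurd hω0 hω'
      simp at hlayer
  · -- ω > 0 → pers > 0
    intro hωpos
    by_contra hp
    push_neg at hp
    have hp0 : pers N T c = 0 := Nat.le_zero.mp hp
    -- build a relabeled partition with positive persistence
    set i0 : Fin N := ⟨0, hN⟩
    set c' : ℕ → Fin N → ℕ := fun s i => if c s i = c s i0 then 0 else c s i + 1 with hc'
    have hintra : ∀ s (i j : Fin N),
        kdelta (c' s i) (c' s j) = kdelta (c s i) (c s j) := by
      intro s i j
      exact kdelta_relabel (c s i) (c s j) (c s i0)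
    have hQ' : Q N T B ω c' =
        (∑ s ∈ Finset.range T, ∑ i : Fin N, ∑ j : Fin N, B s i j * kdelta (c s i) (c s j))
          + 2 * ω * (pers N T c' : ℝ) := by
      rw [Q]
      congr 1
      refine Finset.sum_congr rfl fun s _ => Finset.sum_congr rfl fun i _ =>
        Finset.sum_congr rfl fun j _ => ?_
      rw [hintra]
    have hpers' : (1 : ℕ) ≤ pers N T c' := by
      have h0mem : (0 : ℕ) ∈ Finset.range (T - 1) := by
        simp; omega
      have : 1 ≤ persAt N c' 0 := by
        rw [persAt]
        refine Finset.card_pos.mpr ⟨i0, Finset.mem_filter.mpr ⟨Finset.mem_univ _, ?_⟩⟩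
        simp [hc']
      calc (1 : ℕ) ≤ persAt N c' 0 := this
        _ ≤ ∑ t ∈ Finset.range (T - 1), persAt N c' t :=
            Finset.single_le_sum (fun t _ => Nat.zero_le _) h0mem
    have hle := hopt c'
    rw [hQ', Q, hp0] at hle
    simp only [Nat.cast_zero, mul_zero, add_zero] at hle
    have : 2 * ω * (pers N T c' : ℝ) ≤ 0 := by linarith
    have hposR : (0 : ℝ) < 2 * ω * (pers N T c' : ℝ) := by
      have : (1 : ℝ) ≤ (pers N T c' : ℝ) := by exact_mod_cast hpers'
      nlinarith
    linarith
end

section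
/- For a globally optimal multilayer partition C (with no disconnected components in communities) and any layer s, the partitions induced by C on layers s and s+1 are equal if and only if the persistence between layers s and s+1 equals N, i.e., Pers(C)|_s = Σ_{i=1}^N δ(c_{i_s}, c_{i_{s+1}}) = N. Moreover, the 'if' direction holds for any multilayer partition, optimal or not. -/
open Finset

/-! If the partitions induced on layers `s` and `s+1` agree, there is an injective relabelling
`σ` of community labels sending each community of layer `s+1` to the community of layer `s`
with the same members. Applying `σ` to every layer after `s` changes no intra-layer delta and
no persistence other than the one between `s` and `s+1`, which becomes `N`; so the quality
grows by `2ω (N - persAt s)`, and optimality forces `persAt s = N`. -/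

theorem Function.exists_injective_comp_eq_of_forall_eq_iff {α : Type*} [Finite α]
    {f g : α → ℕ} (h : ∀ a b, f a = f b ↔ g a = g b) :
    ∃ σ : ℕ → ℕ, σ.Injective ∧ ∀ a, σ (g a) = f a := by
  obtain ⟨M, hM⟩ := (Set.finite_range f).bddAbove
  have hfM : ∀ a, f a ≤ M := fun a => hM ⟨a, rfl⟩
  have hfg : f.FactorsThrough g := fun a b hab => (h a b).mpr hab
  -- labels outside the range of `g` are shifted beyond every label of `f`
  set σ := Function.extend g f (fun x => M + 1 + x)
  have hσ_range : ∀ a, σ (g a) = f a := hfg.extend_apply _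
  have hσ_off : ∀ x, (¬∃ a, g a = x) → σ x = M + 1 + x := Function.extend_apply' _ _
  refine ⟨σ, fun x y hxy => ?_, hσ_range⟩
  by_cases hx : ∃ a, g a = x <;> by_cases hy : ∃ b, g b = y
  · obtain ⟨a, rfl⟩ := hx
    obtain ⟨b, rfl⟩ := hy
    rw [hσ_range, hσ_range] at hxy
    exact (h a b).mp hxy
  · obtain ⟨a, rfl⟩ := hx
    have := hfM a
    rw [hσ_range, hσ_off y hy] at hxy
    omega
  · obtain ⟨b, rfl⟩ := hy
    have := hfM b
    rw [hσ_range, hσ_off x hx] at hxy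
    omega
  · rw [hσ_off x hx, hσ_off y hy] at hxy
    omega

lemma kdelta_comp_of_injective {σ : ℕ → ℕ} (hσ : σ.Injective) (a b : ℕ) :
    kdelta (σ a) (σ b) = kdelta a b := by
  simp only [kdelta, hσ.eq_iff]

section Persistence

variable {N : ℕ} (c : ℕ → Fin N → ℕ) (s : ℕ)

lemma persAt_le : persAt N c s ≤ N := by
  simpa [persAt] using card_filter_le (univ : Finset (Fin N)) fun i => c s i = c (s + 1) i

lemma persAt_eq_iff_forall : persAt N c s = N ↔ ∀ i, c s i = c (s + 1) i := by
  simpa [persAt] using card_filter_eq_iff (s := (univ : Finset (Fin N)))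
    (p := fun i => c s i = c (s + 1) i)

lemma forall_eq_iff_of_persAt_eq (h : persAt N c s = N) (i j : Fin N) :
    c s i = c s j ↔ c (s + 1) i = c (s + 1) j := by
  rw [(persAt_eq_iff_forall c s).mp h i, (persAt_eq_iff_forall c s).mp h j]

end Persistence

def relabelAfter {N : ℕ} (s : ℕ) (σ : ℕ → ℕ) (c : ℕ → Fin N → ℕ) : ℕ → Fin N → ℕ :=
  fun t i => if s < t then σ (c t i) else c t i

section Relabel

variable {N : ℕ} (c : ℕ → Fin N → ℕ) (s : ℕ) {σ : ℕ → ℕ}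

lemma kdelta_relabelAfter (hσ : σ.Injective) (t : ℕ) (i j : Fin N) :
    kdelta (relabelAfter s σ c t i) (relabelAfter s σ c t j) = kdelta (c t i) (c t j) := by
  unfold relabelAfter
  split_ifs
  exacts [kdelta_comp_of_injective hσ _ _, rfl]

lemma persAt_relabelAfter_of_ne (hσ : σ.Injective) {t : ℕ} (ht : t ≠ s) :
    persAt N (relabelAfter s σ c) t = persAt N c t := by
  unfold persAt relabelAfter
  congr 1
  refine filter_congr fun i _ => ?_
  by_cases hst : s < t
  · have hst' : s < t + 1 := by omega
    simp only [hst, hst', if_true, hσ.eq_iff]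
  · have hst' : ¬s < t + 1 := by omega
    simp only [hst, hst', if_false]

lemma persAt_relabelAfter_self (hσc : ∀ i, σ (c (s + 1) i) = c s i) :
    persAt N (relabelAfter s σ c) s = N := by
  rw [persAt_eq_iff_forall]
  intro i
  simp [relabelAfter, hσc]

lemma pers_relabelAfter_add_persAt {T : ℕ} (hs : s + 1 < T) (hσ : σ.Injective)
    (hσc : ∀ i, σ (c (s + 1) i) = c s i) :
    pers N T (relabelAfter s σ c) + persAt N c s = pers N T c + N := by
  have hmem : s ∈ range (T - 1) := mem_range.mpr (by omega)
  have hrest : ∑ t ∈ (range (T - 1)).erase s, persAt N (relabelAfter s σ c) t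
      = ∑ t ∈ (range (T - 1)).erase s, persAt N c t :=
    sum_congr rfl fun t ht => persAt_relabelAfter_of_ne c s hσ (ne_of_mem_erase ht)
  unfold pers
  rw [← add_sum_erase _ _ hmem, ← add_sum_erase _ _ hmem, hrest,
    persAt_relabelAfter_self c s hσc]
  ring

lemma Q_relabelAfter {T : ℕ} (B : ℕ → Fin N → Fin N → ℝ) (ω : ℝ) (hs : s + 1 < T)
    (hσ : σ.Injective) (hσc : ∀ i, σ (c (s + 1) i) = c s i) :
    Q N T B ω (relabelAfter s σ c) = Q N T B ω c + 2 * ω * (N - persAt N c s) := by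
  have hpers : (pers N T (relabelAfter s σ c) : ℝ) + persAt N c s = pers N T c + N := by
    exact_mod_cast pers_relabelAfter_add_persAt c s hs hσ hσc
  unfold Q
  simp only [kdelta_relabelAfter c s hσ]
  linear_combination 2 * ω * hpers

end Relabel

lemma IsOptimal.persAt_eq_of_forall_eq_iff {N T : ℕ} {B : ℕ → Fin N → Fin N → ℝ} {ω : ℝ}
    {c : ℕ → Fin N → ℕ} (hopt : IsOptimal N T B ω c) (hω : 0 < ω) {s : ℕ} (hs : s + 1 < T)
    (hpart : ∀ i j : Fin N, c s i = c s j ↔ c (s + 1) i = c (s + 1) j) :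
    persAt N c s = N := by
  obtain ⟨σ, hσ, hσc⟩ := Function.exists_injective_comp_eq_of_forall_eq_iff hpart
  have hQ := Q_relabelAfter c s B ω hs hσ hσc
  have hgain : 2 * ω * ((N : ℝ) - persAt N c s) ≤ 0 := by
    linarith [hopt (relabelAfter s σ c)]
  have hge : (N : ℝ) ≤ persAt N c s := by
    nlinarith
  exact le_antisymm (persAt_le c s) (by exact_mod_cast hge)

theorem induced_partitions_eq_iff_full_persistence_general
    (N T : ℕ)
    (B : ℕ → Fin N → Fin N → ℝ) (ω : ℝ) (hω : 0 < ω)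
    (c : ℕ → Fin N → ℕ)
    (hopt : IsOptimal N T B ω c)
    (s : ℕ) (hs : s + 1 < T) :
    ((∀ i j : Fin N, (c s i = c s j ↔ c (s + 1) i = c (s + 1) j)) ↔ persAt N c s = N)
    ∧ (∀ c' : ℕ → Fin N → ℕ, persAt N c' s = N →
        ∀ i j : Fin N, (c' s i = c' s j ↔ c' (s + 1) i = c' (s + 1) j)) :=
  ⟨⟨hopt.persAt_eq_of_forall_eq_iff hω hs, forall_eq_iff_of_persAt_eq c s⟩,
    fun c' => forall_eq_iff_of_persAt_eq c' s⟩

/-- **Proposition 3.** For a globally optimal multilayer partition `c` (with no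
disconnected components in communities) with coupling `ω > 0`, the partitions induced on
layers `s` and `s+1` are equal if and only if the persistence between layers `s` and `s+1`
equals `N`. Moreover, the "if" direction holds for any multilayer partition. -/
theorem induced_partitions_eq_iff_full_persistence
    (N T : ℕ)
    (B : ℕ → Fin N → Fin N → ℝ) (ω : ℝ) (hω : 0 < ω)
    (c : ℕ → Fin N → ℕ)
    (hopt : IsOptimal N T B ω c)
    (hconn : NoDisconnectedCommunities N T B ω c)
    (s : ℕ) (hs : s + 1 < T) :
    ((∀ i j : Fin N, (c s i = c s j ↔ c (s + 1) i = c (s + 1) j)) ↔ persAt N c s = N)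
    ∧ (∀ c' : ℕ → Fin N → ℕ, persAt N c' s = N →
        ∀ i j : Fin N, (c' s i = c' s j ↔ c' (s + 1) i = c' (s + 1) j)) :=
  induced_partitions_eq_iff_full_persistence_general N T B ω hω c hopt s hs
end

section
/- There exists ω_0 > 0 (for instance ω_0 = ΔQ / (2N(|T|−1)), where ΔQ is the gap between the largest and second-largest values of the single-layer total quality over all multilayer partitions) such that for all 0 < ω < ω_0, every globally optimal multilayer partition C_max^ω for coupling ω satisfies: the disjoint union of the partitions it induces on individual layers is a globally optimal partition for the uncoupled problem (ω = 0). -/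
open Finset

noncomputable def gAux (N T : ℕ) (B : ℕ → Fin N → Fin N → ℝ)
    (f : Fin T → Fin N → Fin N → Bool) : ℝ :=
  ∑ s : Fin T, ∑ i : Fin N, ∑ j : Fin N, B s i j * (if f s i j then 1 else 0)

lemma Q0_eq (N T : ℕ) (B : ℕ → Fin N → Fin N → ℝ) (c : ℕ → Fin N → ℕ) :
    Q N T B 0 c = gAux N T B (fun s i j => decide (c s i = c s j)) := by
  unfold Q gAux kdelta
  rw [← Fin.sum_univ_eq_sum_range
    (fun s => ∑ i : Fin N, ∑ j : Fin N, B s i j * (if c s i = c s j then 1 else 0)) T]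
  simp

lemma Q0_relabel (N T : ℕ) (B : ℕ → Fin N → Fin N → ℝ) (c : ℕ → Fin N → ℕ) :
    Q N T B 0 (fun s i => Nat.pair s (c s i)) = Q N T B 0 c := by
  unfold Q kdelta
  simp [Nat.pair_eq_pair]

lemma Q_split (N T : ℕ) (B : ℕ → Fin N → Fin N → ℝ) (ω : ℝ) (c : ℕ → Fin N → ℕ) :
    Q N T B ω c = Q N T B 0 c + 2 * ω * (pers N T c : ℝ) := by
  unfold Q; ring

lemma pers_le (N T : ℕ) (c : ℕ → Fin N → ℕ) : pers N T c ≤ N * (T - 1) := by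
  unfold pers
  calc ∑ s ∈ Finset.range (T - 1), persAt N c s
      ≤ ∑ _s ∈ Finset.range (T - 1), N := by
        refine Finset.sum_le_sum fun s _ => ?_
        unfold persAt
        exact (Finset.card_filter_le _ _).trans (by simp)
    _ = N * (T - 1) := by simp [mul_comm]

/-- **Proposition 4.** There exists `ω₀ > 0` such that for all `0 < ω < ω₀`, every
globally optimal multilayer partition at coupling `ω` induces, via the disjoint union of
its induced single-layer partitions (here realized by relabeling community `k` in layer
`s` as `Nat.pair s k`), a globally optimal partition of the uncoupled (`ω = 0`) problem. -/
theorem small_coupling_induces_uncoupled_optimum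
    (N T : ℕ)
    (B : ℕ → Fin N → Fin N → ℝ)
    (htwo : ∃ c₁ c₂ : ℕ → Fin N → ℕ, Q N T B 0 c₁ ≠ Q N T B 0 c₂) :
    ∃ ω₀ : ℝ, 0 < ω₀ ∧ ∀ ω : ℝ, 0 < ω → ω < ω₀ →
      ∀ c : ℕ → Fin N → ℕ, IsOptimal N T B ω c →
        IsOptimal N T B 0 (fun s i => Nat.pair s (c s i)) := by
  classical
  have hfin : (Set.range (fun c => Q N T B 0 c)).Finite := by
    apply (Set.finite_range (gAux N T B)).subset
    rintro x ⟨c, rfl⟩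
    exact ⟨fun s i j => decide (c s i = c s j), (Q0_eq N T B c).symm⟩
  set V := hfin.toFinset with hV
  have hmemV : ∀ c, Q N T B 0 c ∈ V := fun c => hfin.mem_toFinset.2 ⟨c, rfl⟩
  have hVne : V.Nonempty := ⟨_, hmemV (fun _ _ => 0)⟩
  set M := V.max' hVne with hM
  obtain ⟨cM, hcM⟩ : ∃ c, Q N T B 0 c = M :=
    Set.mem_range.1 (hfin.mem_toFinset.1 (V.max'_mem hVne))
  have hle : ∀ c, Q N T B 0 c ≤ M := fun c => V.le_max' _ (hmemV c)
  obtain ⟨c₁, c₂, hne⟩ := htwo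
  have hV2ne : (V.erase M).Nonempty := by
    rcases ne_or_eq (Q N T B 0 c₁) M with h | h
    · exact ⟨_, Finset.mem_erase.2 ⟨h, hmemV c₁⟩⟩
    · exact ⟨_, Finset.mem_erase.2 ⟨by rw [← h]; exact hne.symm, hmemV c₂⟩⟩
  set M2 := (V.erase M).max' hV2ne with hM2
  have hM2mem := (V.erase M).max'_mem hV2ne
  have hM2lt : M2 < M :=
    lt_of_le_of_ne (V.le_max' _ (Finset.mem_of_mem_erase hM2mem))
      (Finset.ne_of_mem_erase hM2mem)
  have hsec : ∀ c, Q N T B 0 c ≠ M → Q N T B 0 c ≤ M2 := fun c h =>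
    (V.erase M).le_max' _ (Finset.mem_erase.2 ⟨h, hmemV c⟩)
  set K : ℝ := ((N * (T - 1) : ℕ) : ℝ) with hK
  have hK0 : 0 ≤ K := by positivity
  refine ⟨(M - M2) / (2 * K + 1), div_pos (by linarith) (by positivity), fun ω hω hωlt c hopt => ?_⟩
  -- key: Q0 c = M
  have hpc : (pers N T c : ℝ) ≤ K := by rw [hK]; exact_mod_cast pers_le N T c
  have hQ0c : Q N T B 0 c = M := by
    by_contra h
    have h2 : Q N T B 0 c ≤ M2 := hsec c h
    have hopt' := hopt cM
    rw [Q_split N T B ω cM, Q_split N T B ω c] at hopt'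
    have hpers : (0 : ℝ) ≤ (pers N T cM : ℝ) := by positivity
    have hsmall : 2 * ω * (pers N T c : ℝ) < M - M2 := by
      have h1 : 2 * ω * (pers N T c : ℝ) ≤ 2 * ω * K := by nlinarith
      have h2' : ω * (2 * K + 1) < M - M2 := (lt_div_iff₀ (by positivity)).1 hωlt
      nlinarith
    have h3 : (0:ℝ) ≤ 2 * ω * (pers N T cM : ℝ) := by positivity
    linarith [hcM.ge]
  intro c'
  rw [Q0_relabel, hQ0c]
  exact hle c'
end

section
/- Let ω_1 > ω_2 > 0, and let C be any globally optimal multilayer partition for coupling ω_2. Then either C is also globally optimal for coupling ω_1, or Pers(C) < Pers(C') for every globally optimal partition C' for coupling ω_1. -/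
open Finset

/-- **Proposition 7.** Let `ω₁ > ω₂ > 0` and let `c` be a globally optimal multilayer
partition for coupling `ω₂`. Then either `c` is also globally optimal for coupling `ω₁`,
or its persistence is strictly smaller than that of every globally optimal partition for
coupling `ω₁`. -/
theorem optimal_at_smaller_coupling_dichotomy_pers
    (N T : ℕ)
    (B : ℕ → Fin N → Fin N → ℝ)
    (ω₁ ω₂ : ℝ) (h21 : ω₂ < ω₁) (h2 : 0 < ω₂)
    (c : ℕ → Fin N → ℕ) (hopt : IsOptimal N T B ω₂ c) :
    IsOptimal N T B ω₁ c ∨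
      ∀ c' : ℕ → Fin N → ℕ, IsOptimal N T B ω₁ c' → pers N T c < pers N T c' := by
  by_cases h : IsOptimal N T B ω₁ c
  · exact Or.inl h
  · right
    intro c' hopt1
    by_contra hle
    push_neg at hle
    apply h
    -- From ω₂-optimality: Q(c';ω₂) ≤ Q(c;ω₂)
    have h2' := hopt c'
    have key : Q N T B ω₁ c' ≤ Q N T B ω₁ c := by
      unfold Q at h2' ⊢
      have hp : (pers N T c' : ℝ) ≤ (pers N T c : ℝ) := by exact_mod_cast hle
      nlinarith [h2', hp, h21]
    intro c''
    exact le_trans (hopt1 c'') key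
end

section
/- Let ω_1 > ω_2 > 0, and let C be any globally optimal multilayer partition for coupling ω_2. Then either C is also globally optimal for coupling ω_1, or the intra-layer quality of C strictly exceeds that of every optimal partition for ω_1: Q(C; 0) > Q(C'; 0) for all globally optimal C' at coupling ω_1, where Q(C; 0) = Σ_{s=1}^{|T|} Σ_{i,j=1}^N B_{ijs} δ(c_{i_s},c_{j_s}). -/
open Finset

/-- **Proposition 8.** Let `ω₁ > ω₂ > 0` and let `c` be a globally optimal multilayer
partition for coupling `ω₂`. Then either `c` is also globally optimal for coupling `ω₁`,
or its intra-layer quality `Q(c; 0)` strictly exceeds that of every globally optimal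
partition for coupling `ω₁`. -/
theorem optimal_at_smaller_coupling_dichotomy_intra
    (N T : ℕ)
    (B : ℕ → Fin N → Fin N → ℝ)
    (ω₁ ω₂ : ℝ) (h21 : ω₂ < ω₁) (h2 : 0 < ω₂)
    (c : ℕ → Fin N → ℕ) (hopt : IsOptimal N T B ω₂ c) :
    IsOptimal N T B ω₁ c ∨
      ∀ c' : ℕ → Fin N → ℕ, IsOptimal N T B ω₁ c' → Q N T B 0 c' < Q N T B 0 c := by
  by_cases h : IsOptimal N T B ω₁ c
  · exact Or.inl h
  · right
    intro c' hc'
    obtain ⟨d, hd⟩ := not_forall.mp h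
    have h1 : Q N T B ω₁ c < Q N T B ω₁ c' := lt_of_lt_of_le (not_le.mp hd) (hc' d)
    have h2' : Q N T B ω₂ c' ≤ Q N T B ω₂ c := hopt c'
    simp only [Q] at h1 h2' ⊢
    nlinarith [mul_pos (sub_pos.mpr h21) h2]
end

section
/- The maximal intra-layer quality achievable by globally optimal multilayer partitions is a non-increasing function of the inter-layer coupling: if ω_1 > ω_2 > 0, then max{Q(C; 0) : C optimal at ω_1} ≤ max{Q(C; 0) : C optimal at ω_2}. -/
open Finset

/-- Q only depends on the induced equivalence of node-layer pairs in layers `< T`. -/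
lemma Q_congr (N T : ℕ) (B : ℕ → Fin N → Fin N → ℝ) (ω : ℝ) (c c' : ℕ → Fin N → ℕ)
    (H : ∀ s t, s < T → t < T → ∀ i j : Fin N, (c s i = c t j ↔ c' s i = c' t j)) :
    Q N T B ω c = Q N T B ω c' := by
  have hpers : pers N T c = pers N T c' := by
    unfold pers persAt
    apply Finset.sum_congr rfl
    intro s hs
    rw [Finset.mem_range] at hs
    congr 1
    apply Finset.filter_congr
    intro i _
    simpa using H s (s + 1) (by omega) (by omega) i i
  unfold Q
  rw [hpers]
  congr 1
  apply Finset.sum_congr rfl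
  intro s hs
  rw [Finset.mem_range] at hs
  apply Finset.sum_congr rfl
  intro i _
  apply Finset.sum_congr rfl
  intro j _
  congr 1
  unfold kdelta
  rw [if_congr (H s s hs hs i j) rfl rfl]

/-- The equivalence class of `(s, i)` among node-layer pairs in layers `< T`. -/
def classSet (N T : ℕ) (c : ℕ → Fin N → ℕ) (s : ℕ) (i : Fin N) : Finset ℕ :=
  ((Finset.range T ×ˢ (Finset.univ : Finset (Fin N))).filter
      (fun p => c p.1 p.2 = c s i)).image (fun p => p.1 * N + (p.2 : ℕ))

lemma classSet_nonempty (N T : ℕ) (c : ℕ → Fin N → ℕ) (s : ℕ) (i : Fin N) (hs : s < T) :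
    (classSet N T c s i).Nonempty := by
  refine ⟨s * N + (i : ℕ), ?_⟩
  unfold classSet
  apply Finset.mem_image.mpr
  exact ⟨(s, i), by simp [Finset.mem_filter, Finset.mem_product, hs], rfl⟩

/-- Canonical relabeling of a multilayer partition. -/
noncomputable def canon (N T : ℕ) (c : ℕ → Fin N → ℕ) (s : ℕ) (i : Fin N) : ℕ :=
  if h : s < T then (classSet N T c s i).min' (classSet_nonempty N T c s i h) else 0

lemma enc_inj (N : ℕ) {a b : ℕ} {i j : Fin N} (h : a * N + (i : ℕ) = b * N + (j : ℕ)) :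
    a = b ∧ (i : ℕ) = (j : ℕ) := by
  have hi : (i : ℕ) < N := i.2
  have hj : (j : ℕ) < N := j.2
  have hmod : (i : ℕ) = (j : ℕ) := by
    have h0 : (i : ℕ) + a * N = (j : ℕ) + b * N := by omega
    have h1 := congrArg (· % N) h0
    simpa [Nat.add_mul_mod_self_right, Nat.mod_eq_of_lt hi, Nat.mod_eq_of_lt hj] using h1
  refine ⟨?_, hmod⟩
  have hN : 0 < N := by omega
  have : a * N = b * N := by omega
  exact Nat.eq_of_mul_eq_mul_right hN this

lemma min'_congr' (A B : Finset ℕ) (hA : A.Nonempty) (hB : B.Nonempty) (h : A = B) :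
    A.min' hA = B.min' hB := by subst h; rfl

lemma canon_eq_iff (N T : ℕ) (c : ℕ → Fin N → ℕ) {s t : ℕ} (hs : s < T) (ht : t < T)
    (i j : Fin N) : canon N T c s i = canon N T c t j ↔ c s i = c t j := by
  constructor
  · intro h
    unfold canon at h
    rw [dif_pos hs, dif_pos ht] at h
    have h1 := Finset.min'_mem _ (classSet_nonempty N T c s i hs)
    have h2 := Finset.min'_mem _ (classSet_nonempty N T c t j ht)
    rw [h] at h1
    unfold classSet at h1 h2
    obtain ⟨p, hp, hpe⟩ := Finset.mem_image.mp h1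
    obtain ⟨q, hq, hqe⟩ := Finset.mem_image.mp h2
    rw [Finset.mem_filter] at hp hq
    obtain ⟨ha, hb⟩ := enc_inj N (hpe.trans hqe.symm)
    have hpq : p = q := Prod.ext ha (Fin.ext hb)
    rw [← hp.2, hpq, hq.2]
  · intro h
    unfold canon
    rw [dif_pos hs, dif_pos ht]
    apply min'_congr'
    unfold classSet
    rw [h]

lemma canon_lt (N T : ℕ) (c : ℕ → Fin N → ℕ) {s : ℕ} (hs : s < T) (i : Fin N) :
    canon N T c s i < T * N := by
  unfold canon
  rw [dif_pos hs]
  have h1 := Finset.min'_mem _ (classSet_nonempty N T c s i hs)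
  unfold classSet at h1
  obtain ⟨p, hp, hpe⟩ := Finset.mem_image.mp h1
  rw [Finset.mem_filter, Finset.mem_product, Finset.mem_range] at hp
  have h2 : (p.2 : ℕ) < N := p.2.2
  have h3 : p.1 + 1 ≤ T := hp.1.1
  calc _ = p.1 * N + (p.2 : ℕ) := hpe.symm
    _ < p.1 * N + N := by omega
    _ = (p.1 + 1) * N := by ring
    _ ≤ T * N := Nat.mul_le_mul_right N h3

/-- Embed a finitary assignment into a full assignment. -/
def embed (N T : ℕ) (g : Fin T → Fin N → Fin (T * N)) : ℕ → Fin N → ℕ :=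
  fun s i => if h : s < T then (g ⟨s, h⟩ i : ℕ) else 0

lemma Q_eq_canon (N T : ℕ) (B : ℕ → Fin N → Fin N → ℝ) (ω : ℝ) (c : ℕ → Fin N → ℕ) :
    Q N T B ω c = Q N T B ω (canon N T c) := by
  apply Q_congr
  intro s t hs ht i j
  exact (canon_eq_iff N T c hs ht i j).symm

lemma exists_optimal (N T : ℕ) (hN : 0 < N) (hT : 0 < T)
    (B : ℕ → Fin N → Fin N → ℝ) (ω : ℝ) :
    ∃ c : ℕ → Fin N → ℕ, IsOptimal N T B ω c := by
  have hTN : 0 < T * N := Nat.mul_pos hT hN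
  have : Nonempty (Fin T → Fin N → Fin (T * N)) := ⟨fun _ _ => ⟨0, hTN⟩⟩
  obtain ⟨g, -, hg⟩ := Finset.exists_max_image (Finset.univ : Finset (Fin T → Fin N → Fin (T * N)))
    (fun g => Q N T B ω (embed N T g)) Finset.univ_nonempty
  refine ⟨embed N T g, ?_⟩
  intro c'
  have hc : Q N T B ω c' = Q N T B ω (embed N T (fun s i => ⟨canon N T c' s i, canon_lt N T c' s.2 i⟩)) := by
    rw [Q_eq_canon N T B ω c']
    congr 1
    funext s i
    by_cases h : s < T
    · simp [embed, canon, h]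
    · simp [embed, canon, h]
  rw [hc]
  exact hg _ (Finset.mem_univ _)

/-- **Corollary 2.** The maximal intra-layer quality achievable by globally optimal
multilayer partitions is non-increasing in the inter-layer coupling: if `ω₁ > ω₂ > 0`,
then for any partition optimal at `ω₁` there is a partition optimal at `ω₂` with at least
as large an intra-layer quality `Q(·; 0)`. -/
theorem max_intralayer_quality_nonincreasing
    (N T : ℕ)
    (B : ℕ → Fin N → Fin N → ℝ)
    (ω₁ ω₂ : ℝ) (h21 : ω₂ < ω₁) (h2 : 0 < ω₂) :
    ∀ c₁ : ℕ → Fin N → ℕ, IsOptimal N T B ω₁ c₁ →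
      ∃ c₂ : ℕ → Fin N → ℕ, IsOptimal N T B ω₂ c₂ ∧ Q N T B 0 c₁ ≤ Q N T B 0 c₂ := by
  intro c₁ h₁
  by_cases hdeg : 0 < N ∧ 0 < T
  · obtain ⟨c₂, h₂opt⟩ := exists_optimal N T hdeg.1 hdeg.2 B ω₂
    refine ⟨c₂, h₂opt, ?_⟩
    have hA := h₁ c₂
    have hB := h₂opt c₁
    unfold Q at hA hB ⊢
    set A1 := ∑ s ∈ Finset.range T, ∑ i : Fin N, ∑ j : Fin N, B s i j * kdelta (c₁ s i) (c₁ s j)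
    set A2 := ∑ s ∈ Finset.range T, ∑ i : Fin N, ∑ j : Fin N, B s i j * kdelta (c₂ s i) (c₂ s j)
    set P1 := (pers N T c₁ : ℝ)
    set P2 := (pers N T c₂ : ℝ)
    nlinarith [hA, hB, h21, h2]
  · -- degenerate case: Q is constant in c
    have H : ∀ c c' : ℕ → Fin N → ℕ, ∀ ω : ℝ, Q N T B ω c = Q N T B ω c' := by
      intro c c' ω
      apply Q_congr
      intro s t hs ht i j
      rcases not_and_or.mp hdeg with h | h
      · exact absurd i.2 (by omega)
      · omega
    exact ⟨c₁, fun c' => (H c' c₁ ω₂).le, le_refl _⟩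
end

section
/- In a signed network whose nodes are divided into categories with intra-category edge weights a > 0 and inter-category edge weights b < 0, the signed Newman–Girvan (NGS) expected edge weight P_{ij} = k_i^+ k_j^+/(2m^+) − k_i^− k_j^−/(2m^−) between two nodes of the same category is strictly increasing in the category size: if |κ_1| > |κ_2| then P_{i,j∈κ_1} > P_{i,j∈κ_2}. -/
open Finset

/-- Number of nodes in category `q` under the category map `κ`. -/
def catSize (N K : ℕ) (κ : Fin N → Fin K) (q : Fin K) : ℕ :=
  (Finset.univ.filter fun i => κ i = q).card

/-- Positive strength of a node in a category of size `n`: `k⁺ = n·a`. -/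
noncomputable def kplus (a : ℝ) (n : ℕ) : ℝ := (n : ℝ) * a

/-- Negative strength of a node in a category of size `n`: `k⁻ = (N − n)·|b|` (here `b < 0`). -/
noncomputable def kminus (N : ℕ) (b : ℝ) (n : ℕ) : ℝ := ((N : ℝ) - (n : ℝ)) * (-b)

/-- In a signed network divided into categories with intra-category edge weight `a > 0`
and inter-category edge weight `b < 0`, the signed Newman–Girvan (NGS) expected edge
weight `k⁺_i k⁺_j/(2m⁺) − k⁻_i k⁻_j/(2m⁻)` between two nodes of the same category is
strictly increasing in the category size. -/
theorem ngs_null_intra_category_weight_increasing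
    (N K : ℕ) (κ : Fin N → Fin K) (a b : ℝ)
    (ha : 0 < a) (hb : b < 0)
    (hsz : ∀ q : Fin K, 1 ≤ catSize N K κ q ∧ catSize N K κ q ≤ N)
    (hmp : 0 < ∑ i : Fin N, kplus a (catSize N K κ (κ i)))
    (hmm : 0 < ∑ i : Fin N, kminus N b (catSize N K κ (κ i))) :
    ∀ q₁ q₂ : Fin K, catSize N K κ q₂ < catSize N K κ q₁ →
      (kplus a (catSize N K κ q₂))^2 / (∑ i : Fin N, kplus a (catSize N K κ (κ i)))
          - (kminus N b (catSize N K κ q₂))^2 /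
              (∑ i : Fin N, kminus N b (catSize N K κ (κ i))) <
        (kplus a (catSize N K κ q₁))^2 / (∑ i : Fin N, kplus a (catSize N K κ (κ i)))
          - (kminus N b (catSize N K κ q₁))^2 /
              (∑ i : Fin N, kminus N b (catSize N K κ (κ i))) := by
  intro q₁ q₂ hlt
  set Sp := ∑ i : Fin N, kplus a (catSize N K κ (κ i)) with hSp
  set Sm := ∑ i : Fin N, kminus N b (catSize N K κ (κ i)) with hSm
  set n₁ := catSize N K κ q₁ with hn1
  set n₂ := catSize N K κ q₂ with hn2
  have hn1N : n₁ ≤ N := (hsz q₁).2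
  have hn2N : n₂ ≤ N := (hsz q₂).2
  have hcast : (n₂ : ℝ) < (n₁ : ℝ) := by exact_mod_cast hlt
  have h2 : (0:ℝ) ≤ (n₂ : ℝ) := Nat.cast_nonneg _
  have hplus : (kplus a n₂)^2 < (kplus a n₁)^2 := by
    unfold kplus
    have h2a : (0:ℝ) ≤ (n₂:ℝ) * a := mul_nonneg h2 ha.le
    have : (n₂:ℝ) * a < (n₁:ℝ) * a := by
      exact mul_lt_mul_of_pos_right hcast ha
    exact pow_lt_pow_left₀ this h2a (by norm_num)
  have hminus : (kminus N b n₁)^2 ≤ (kminus N b n₂)^2 := by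
    unfold kminus
    have hb' : (0:ℝ) ≤ -b := by linarith
    have h1 : (0:ℝ) ≤ ((N:ℝ) - n₁) := by
      have : (n₁:ℝ) ≤ N := by exact_mod_cast hn1N
      linarith
    have hle : ((N:ℝ) - n₁) * (-b) ≤ ((N:ℝ) - n₂) * (-b) := by
      apply mul_le_mul_of_nonneg_right _ hb'
      linarith
    exact pow_le_pow_left₀ (mul_nonneg h1 hb') hle 2
  have hA : (kplus a n₂)^2 / Sp < (kplus a n₁)^2 / Sp :=
    (div_lt_div_iff_of_pos_right hmp).mpr hplus
  have hB : (kminus N b n₁)^2 / Sm ≤ (kminus N b n₂)^2 / Sm :=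
    (div_le_div_iff_of_pos_right hmm).mpr hminus
  linarith
end

section
/- Let A be the Pearson correlation matrix of N time series, so A_{ij} = corr(ẑ_i, ẑ_j) where ẑ_i is the standardized i-th time series. Then the node strength satisfies k_i = Σ_j A_{ij} = cov(ẑ_i, ẑ_tot), where ẑ_tot = Σ_{i=1}^N ẑ_i, and consequently k_i k_j/(2m) = corr(ẑ_i, ẑ_tot)·corr(ẑ_j, ẑ_tot), where 2m = Σ_{i,j} A_{ij}. -/
open Finset

variable {τ : Type*} [Fintype τ]

/-- Mean of a finite time series. -/
noncomputable def tmean (x : τ → ℝ) : ℝ := (∑ t, x t) / (Fintype.card τ : ℝ)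

/-- Covariance of two finite time series. -/
noncomputable def tcov (x y : τ → ℝ) : ℝ :=
  (∑ t, (x t - tmean x) * (y t - tmean y)) / (Fintype.card τ : ℝ)

/-- Standard deviation of a finite time series. -/
noncomputable def tsdev (x : τ → ℝ) : ℝ := Real.sqrt (tcov x x)

/-- Pearson correlation of two finite time series. -/
noncomputable def tcorr (x y : τ → ℝ) : ℝ := tcov x y / (tsdev x * tsdev y)

lemma tmean_sum {N : ℕ} (y : Fin N → τ → ℝ) :
    tmean (fun t => ∑ j, y j t) = ∑ j, tmean (y j) := by
  unfold tmean
  rw [← Finset.sum_div, Finset.sum_comm]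

lemma tcov_sum {N : ℕ} (x : τ → ℝ) (y : Fin N → τ → ℝ) :
    tcov x (fun t => ∑ j, y j t) = ∑ j, tcov x (y j) := by
  simp only [tcov, tmean_sum, ← Finset.sum_div]
  congr 1
  rw [Finset.sum_comm]
  refine Finset.sum_congr rfl fun t _ => ?_
  rw [← Finset.sum_sub_distrib, Finset.mul_sum]

lemma tcov_comm (x y : τ → ℝ) : tcov x y = tcov y x := by
  simp [tcov, mul_comm]

/-- For the Pearson correlation matrix `A_{ij} = corr(ẑ_i, ẑ_j)` of `N` standardized time
series (mean `0`, variance `1`), the node strength satisfies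
`k_i = Σ_j A_{ij} = cov(ẑ_i, ẑ_tot)` with `ẑ_tot = Σ_i ẑ_i`, and consequently
`k_i k_j / (2m) = corr(ẑ_i, ẑ_tot) · corr(ẑ_j, ẑ_tot)` where `2m = Σ_{i,j} A_{ij}`. -/
theorem ng_null_from_correlation_matrix
    (N : ℕ) (τ : Type*) [Fintype τ] [Nonempty τ]
    (z : Fin N → τ → ℝ)
    (hmean : ∀ i, tmean (z i) = 0)
    (hvar : ∀ i, tcov (z i) (z i) = 1)
    (hσ : 0 < tsdev (fun t => ∑ i : Fin N, z i t)) :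
    (∀ i : Fin N,
      (∑ j : Fin N, tcorr (z i) (z j)) = tcov (z i) (fun t => ∑ l : Fin N, z l t))
    ∧ (∀ i j : Fin N,
      (∑ l : Fin N, tcorr (z i) (z l)) * (∑ l : Fin N, tcorr (z j) (z l)) /
          (∑ i' : Fin N, ∑ j' : Fin N, tcorr (z i') (z j')) =
        tcorr (z i) (fun t => ∑ l : Fin N, z l t) *
          tcorr (z j) (fun t => ∑ l : Fin N, z l t)) := by
  have hsdev : ∀ i, tsdev (z i) = 1 := fun i => by simp [tsdev, hvar i]
  have hcorr : ∀ i j, tcorr (z i) (z j) = tcov (z i) (z j) := fun i j => by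
    simp [tcorr, hsdev]
  set σ := tsdev (fun t => ∑ i : Fin N, z i t) with hσdef
  have h1 : ∀ i : Fin N,
      (∑ j : Fin N, tcorr (z i) (z j)) = tcov (z i) (fun t => ∑ l : Fin N, z l t) := by
    intro i
    rw [tcov_sum]
    exact Finset.sum_congr rfl fun j _ => hcorr i j
  refine ⟨h1, fun i j => ?_⟩
  have hcovpos : 0 ≤ tcov (fun t => ∑ l : Fin N, z l t) (fun t => ∑ l : Fin N, z l t) :=
    le_of_lt (Real.sqrt_pos.mp hσ)
  have h2m : (∑ i' : Fin N, ∑ j' : Fin N, tcorr (z i') (z j')) = σ ^ 2 := by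
    have h : ∀ i', (∑ j' : Fin N, tcorr (z i') (z j'))
        = tcov (fun t => ∑ l : Fin N, z l t) (z i') := fun i' => (h1 i').trans (tcov_comm _ _)
    rw [Finset.sum_congr rfl fun i' _ => h i', ← tcov_sum, hσdef, tsdev, Real.sq_sqrt hcovpos]
  have hσne : σ ≠ 0 := ne_of_gt hσ
  rw [h1 i, h1 j, h2m]
  have hct : ∀ k, tcorr (z k) (fun t => ∑ l : Fin N, z l t)
      = tcov (z k) (fun t => ∑ l : Fin N, z l t) / σ := fun k => by
    simp [tcorr, hsdev, hσdef]
  rw [hct i, hct j]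
  rw [div_mul_div_comm, sq]
end

section
/- Sample-independence of the uniform null network: suppose C_max is a partition maximizing Q(C | A; γ_1) = Σ_{i,j} (A_{ij} − γ_1⟨A⟩) δ(c_i,c_j), and let C_1,...,C_l ∈ C_max be some of its communities. Let Â be the adjacency matrix of the subgraph induced on C_1 ∪ ... ∪ C_l. Then the restriction {C_1,...,C_l} maximizes Q(C | Â; γ_2) = Σ_{i,j∈C_1∪...∪C_l} (Â_{ij} − γ_2⟨Â⟩) δ(c_i,c_j) over all partitions of C_1 ∪ ... ∪ C_l, where γ_2 = γ_1 ⟨A⟩ / ⟨Â⟩ (assuming ⟨Â⟩ ≠ 0). -/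
open Finset

/-- Mean entry of `A` over a subset `V` of nodes: `⟨Â⟩ = (Σ_{i,j∈V} A_{ij})/|V|²`. -/
noncomputable def subMean (N : ℕ) (A : Fin N → Fin N → ℝ) (V : Finset (Fin N)) : ℝ :=
  (∑ i ∈ V, ∑ j ∈ V, A i j) / (V.card : ℝ)^2

/-- Uniform-null modularity of an assignment on a subset `V` of nodes at resolution `γ`:
`Σ_{i,j∈V} (A_{ij} − γ⟨Â⟩) δ(c_i, c_j)`, with `Â` the induced submatrix. For
`V = univ` this is the full uniform-null modularity. -/
noncomputable def QU (N : ℕ) (A : Fin N → Fin N → ℝ) (V : Finset (Fin N)) (γ : ℝ)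
    (c : Fin N → ℕ) : ℝ :=
  ∑ i ∈ V, ∑ j ∈ V, (A i j - γ * subMean N A V) * (if c i = c j then (1 : ℝ) else 0)

/-- Sample-independence of the uniform null network: if `c` maximizes uniform-null
modularity at resolution `γ₁` on the whole network, and `V` is the union of some of its
communities (those with labels in `L`), then the restriction of `c` maximizes the
uniform-null modularity of the induced subgraph at resolution `γ₂ = γ₁⟨A⟩/⟨Â⟩`. -/
theorem uniform_null_sample_independence
    (N : ℕ) (A : Fin N → Fin N → ℝ) (hAsymm : ∀ i j, A i j = A j i)
    (γ₁ γ₂ : ℝ) (c : Fin N → ℕ)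
    (hopt : ∀ c' : Fin N → ℕ,
      QU N A Finset.univ γ₁ c' ≤ QU N A Finset.univ γ₁ c)
    (L : Finset ℕ)
    (hm : subMean N A (Finset.univ.filter fun i => c i ∈ L) ≠ 0)
    (hγ : γ₂ = γ₁ * subMean N A Finset.univ /
      subMean N A (Finset.univ.filter fun i => c i ∈ L)) :
    ∀ c' : Fin N → ℕ,
      QU N A (Finset.univ.filter fun i => c i ∈ L) γ₂ c' ≤
      QU N A (Finset.univ.filter fun i => c i ∈ L) γ₂ c := by
  intro c'
  set V : Finset (Fin N) := Finset.univ.filter fun i => c i ∈ L with hVdef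
  set p : ℝ := γ₁ * subMean N A Finset.univ with hpdef
  have key : p = γ₂ * subMean N A V := by
    rw [hγ]; field_simp
  have hmemV : ∀ i, i ∈ V ↔ c i ∈ L := by
    intro i; simp [hVdef]
  -- splitting lemma for the full modularity
  have split : ∀ d : Fin N → ℕ, (∀ i j, i ∈ V → j ∉ V → d i ≠ d j) →
      QU N A Finset.univ γ₁ d
        = (∑ i ∈ V, ∑ j ∈ V, (A i j - p) * (if d i = d j then (1:ℝ) else 0))
          + (∑ i ∈ Finset.univ.filter (fun i => ¬ c i ∈ L),
              ∑ j ∈ Finset.univ.filter (fun i => ¬ c i ∈ L),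
                (A i j - p) * (if d i = d j then (1:ℝ) else 0)) := by
    intro d hd
    have hd' : ∀ i j, i ∉ V → j ∈ V → d i ≠ d j := by
      intro i j hi hj h; exact hd j i hj hi h.symm
    unfold QU
    have hsum : ∀ (F : Fin N → ℝ), (∑ i, F i)
        = ∑ i ∈ V, F i + ∑ i ∈ Finset.univ.filter (fun i => ¬ c i ∈ L), F i := by
      intro F
      exact (Finset.sum_filter_add_sum_filter_not Finset.univ _ F).symm
    rw [hsum]
    congr 1
    · apply Finset.sum_congr rfl
      intro i hi
      rw [hsum]
      have : (∑ j ∈ Finset.univ.filter (fun i => ¬ c i ∈ L),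
          (A i j - γ₁ * subMean N A Finset.univ) * (if d i = d j then (1:ℝ) else 0)) = 0 := by
        apply Finset.sum_eq_zero
        intro j hj
        have hjV : j ∉ V := by
          simp only [hVdef, Finset.mem_filter] at hj ⊢
          tauto
        rw [if_neg (hd i j hi hjV), mul_zero]
      rw [this, add_zero]
    · apply Finset.sum_congr rfl
      intro i hi
      rw [hsum]
      have : (∑ j ∈ V,
          (A i j - γ₁ * subMean N A Finset.univ) * (if d i = d j then (1:ℝ) else 0)) = 0 := by
        apply Finset.sum_eq_zero
        intro j hj
        have hiV : i ∉ V := by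
          simp only [hVdef, Finset.mem_filter] at hi ⊢
          tauto
        rw [if_neg (hd' i j hiV hj), mul_zero]
      rw [this, zero_add]
  -- the modified assignment
  set c'' : Fin N → ℕ := fun i => if c i ∈ L then 2 * c' i else 2 * c i + 1 with hc''
  have hcross'' : ∀ i j, i ∈ V → j ∉ V → c'' i ≠ c'' j := by
    intro i j hi hj
    have hiL : c i ∈ L := (hmemV i).1 hi
    have hjL : c j ∉ L := fun h => hj ((hmemV j).2 h)
    simp only [hc'', if_pos hiL, if_neg hjL]
    omega
  have hcrossc : ∀ i j, i ∈ V → j ∉ V → c i ≠ c j := by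
    intro i j hi hj h
    exact hj ((hmemV j).2 (h ▸ (hmemV i).1 hi))
  have e1 := split c'' hcross''
  have e2 := split c hcrossc
  have hopt' := hopt c''
  rw [e1, e2] at hopt'
  -- the W-parts agree
  have hW : (∑ i ∈ Finset.univ.filter (fun i => ¬ c i ∈ L),
      ∑ j ∈ Finset.univ.filter (fun i => ¬ c i ∈ L),
        (A i j - p) * (if c'' i = c'' j then (1:ℝ) else 0))
      = (∑ i ∈ Finset.univ.filter (fun i => ¬ c i ∈ L),
      ∑ j ∈ Finset.univ.filter (fun i => ¬ c i ∈ L),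
        (A i j - p) * (if c i = c j then (1:ℝ) else 0)) := by
    apply Finset.sum_congr rfl
    intro i hi
    apply Finset.sum_congr rfl
    intro j hj
    simp only [Finset.mem_filter] at hi hj
    have : (c'' i = c'' j) ↔ (c i = c j) := by
      simp only [hc'', if_neg hi.2, if_neg hj.2]
      omega
    simp [this]
  rw [hW] at hopt'
  -- the V-part of c'' is QU of c', and V-part of c is QU of c
  have eV : ∀ d : Fin N → ℕ, QU N A V γ₂ d
      = ∑ i ∈ V, ∑ j ∈ V, (A i j - p) * (if d i = d j then (1:ℝ) else 0) := by
    intro d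
    unfold QU
    rw [key]
  have eV'' : (∑ i ∈ V, ∑ j ∈ V, (A i j - p) * (if c'' i = c'' j then (1:ℝ) else 0))
      = QU N A V γ₂ c' := by
    rw [eV]
    apply Finset.sum_congr rfl
    intro i hi
    apply Finset.sum_congr rfl
    intro j hj
    have hiL := (hmemV i).1 hi
    have hjL := (hmemV j).1 hj
    have : (c'' i = c'' j) ↔ (c' i = c' j) := by
      simp only [hc'', if_pos hiL, if_pos hjL]
      omega
    simp [this]
  rw [eV'', ← eV c] at hopt'
  linarith
end
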